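/- Let c : P(S) → ℝ≥0 be decomposable in U-shaped curves, and suppose X ∈ P(S) satisfies: every Y lower adjacent to X has c(Y) > c(X), and every Y upper adjacent to X has c(Y) > c(X). Then X is of minimum cost in every maximal chain of P(S) passing through X. -/
import Mathlib


theorem stmt_15 {S : Type*} [Fintype S] [DecidableEq S] (c : Finset S → NNReal)
    (hc : ∀ X₁ X₂ X₃ : Finset S, X₁ ⊆ X₂ → X₂ ⊆ X₃ → c X₂ ≤ max (c X₁) (c X₃))
    (X : Finset S)
    (hlow : ∀ Y : Finset S, Y ⊆ X → (X \ Y).card = 1 → c X < c Y)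
    (hup : ∀ Y : Finset S, X ⊆ Y → (Y \ X).card = 1 → c X < c Y)
    (C : Fin (Fintype.card S + 1) → Finset S) (hmono : Monotone C)
    (h0 : C 0 = ∅) (hlast : C (Fin.last (Fintype.card S)) = Finset.univ)
    (hadj : ∀ i : Fin (Fintype.card S), (C i.succ \ C i.castSucc).card = 1)
    (i : Fin (Fintype.card S + 1)) (hXC : C i = X) :
    ∀ j : Fin (Fintype.card S + 1), c X ≤ c (C j) := by
  intro j
  rcases lt_trichotomy j i with hj | hj | hj
  · -- j < i : use predecessor of i
    have hi0 : (0 : ℕ) < i.val := lt_of_le_of_lt (Nat.zero_le _) hj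
    set k : Fin (Fintype.card S) := ⟨i.val - 1, by omega⟩ with hk
    have hsucc : k.succ = i := by
      ext; simp [hk, Fin.succ]; omega
    have hYX : C k.castSucc ⊆ X := by
      rw [← hXC]; exact hmono (by simp [Fin.le_def, hk])
    have hcard : (X \ C k.castSucc).card = 1 := by
      rw [← hXC, ← hsucc]; exact hadj k
    have h1 : c X < c (C k.castSucc) := hlow _ hYX hcard
    have hjk : C j ⊆ C k.castSucc := hmono (by
      simp [Fin.le_def, hk]
      omega)
    have h2 := hc (C j) (C k.castSucc) X hjk hYX
    have h3 : c X < max (c (C j)) (c X) := lt_of_lt_of_le h1 h2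
    rcases lt_max_iff.mp h3 with h | h
    · exact le_of_lt h
    · exact absurd h (lt_irrefl _)
  · rw [hj, hXC]
  · -- i < j : use successor of i
    have hin : i.val < Fintype.card S := lt_of_lt_of_le hj (Nat.lt_succ_iff.mp j.isLt)
    set k : Fin (Fintype.card S) := ⟨i.val, hin⟩ with hk
    have hcast : k.castSucc = i := by ext; simp [hk]
    have hXY : X ⊆ C k.succ := by
      rw [← hXC]; exact hmono (by simp [Fin.le_def, hk])
    have hcard : (C k.succ \ X).card = 1 := by
      rw [← hXC, ← hcast]; exact hadj k
    have h1 : c X < c (C k.succ) := hup _ hXY hcard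
    have hkj : C k.succ ⊆ C j := hmono (by
      simp [Fin.le_def, hk, Fin.succ]
      omega)
    have h2 := hc X (C k.succ) (C j) hXY hkj
    have h3 : c X < max (c X) (c (C j)) := lt_of_lt_of_le h1 h2
    rcases lt_max_iff.mp h3 with h | h
    · exact absurd h (lt_irrefl _)
    · exact le_of_lt h
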